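/- arXiv:2001.06508 — 10 statements merged into one kernel-verified Lean document; each statement's English description precedes it below -/
import Mathlib

section
/- Let G be a compact Hausdorff topological group with normalized Haar measure m, and let A ⊆ G be measurable with m(A) > 0. Then for every positive integer k there exists an open neighborhood U of the identity in G such that m(A ∩ u₁A ∩ ⋯ ∩ uₖA) > 0 for all u₁, …, uₖ ∈ U. -/
open MeasureTheory Pointwise ENNReal Filter Topology

/-! Fix a compact `K ⊆ A` with `μ K > 0`. Translation is continuous in measure on compact sets, so
for `u` near `1` each defect `μ (K \ u • K)` is smaller than `μ K / k`; then `k` defects cannot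
exhaust `K`, and `K ∩ ⋂ i, u i • K ⊆ A ∩ ⋂ i, u i • A` keeps positive measure. -/

theorem MeasureTheory.measure_inter_iInter_pos_of_sum_measure_sdiff_lt {α ι : Type*}
    [MeasurableSpace α] [Fintype ι] (μ : Measure α) {s : Set α} {t : ι → Set α}
    (h : ∑ i, μ (s \ t i) < μ s) : 0 < μ (s ∩ ⋂ i, t i) := by
  refine pos_iff_ne_zero.2 fun h0 => h.not_ge ?_
  calc μ s ≤ μ (s ∩ ⋂ i, t i) + μ (s \ ⋂ i, t i) := measure_le_inter_add_sdiff μ s _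
    _ = μ (⋃ i, s \ t i) := by rw [h0, zero_add, Set.sdiff_iInter]
    _ ≤ ∑ i, μ (s \ t i) := measure_iUnion_fintype_le μ _

section TopologicalGroup

variable {G : Type*} [Group G] [TopologicalSpace G] [IsTopologicalGroup G]
  [LocallyCompactSpace G] [MeasurableSpace G] [BorelSpace G] (μ : Measure G)
  [μ.IsMulLeftInvariant] [IsFiniteMeasureOnCompacts μ] [μ.InnerRegularCompactLTTop]

theorem eventually_nhds_one_measure_sdiff_smul_lt {K : Set G} (hK : IsCompact K)
    (hK' : IsClosed K) {ε : ℝ≥0∞} (hε : ε ≠ 0) : ∀ᶠ g in 𝓝 (1 : G), μ (K \ g • K) < ε := by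
  have hinv : Tendsto (fun g : G => g⁻¹) (𝓝 1) (𝓝 1) := by
    simpa using (continuous_inv (G := G)).tendsto 1
  filter_upwards [hinv.eventually (eventually_nhds_one_measure_smul_sdiff_lt (μ := μ) hK hK' hε)]
    with g hg
  rwa [← measure_smul μ g, Set.smul_set_sdiff, smul_inv_smul] at hg

theorem exists_mem_nhds_one_measure_inter_iInter_smul_pos [T2Space G] {ι : Type*} [Fintype ι]
    {A : Set G} (hA : MeasurableSet A) (hA₀ : 0 < μ A) (hA_top : μ A ≠ ∞) :
    ∃ V ∈ 𝓝 (1 : G), ∀ u : ι → G, (∀ i, u i ∈ V) → 0 < μ (A ∩ ⋂ i, u i • A) := by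
  obtain ⟨K, hKA, hK, hK₀⟩ := hA.exists_lt_isCompact_of_ne_top hA_top hA₀
  obtain ⟨ε, hε, hεK⟩ := ENNReal.exists_pos_mul_lt (natCast_ne_top (Fintype.card ι)) hK₀.ne'
  refine ⟨_, eventually_nhds_one_measure_sdiff_smul_lt μ hK hK.isClosed hε.ne', fun u hu => ?_⟩
  have hsum : ∑ i, μ (K \ u i • K) < μ K :=
    calc ∑ i, μ (K \ u i • K) ≤ ∑ _ : ι, ε := Finset.sum_le_sum fun i _ => (hu i).le
      _ = ε * Fintype.card ι := by rw [Finset.sum_const, Finset.card_univ, nsmul_eq_mul, mul_comm]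
      _ < μ K := hεK
  refine (measure_inter_iInter_pos_of_sum_measure_sdiff_lt μ hsum).trans_le (measure_mono ?_)
  exact Set.inter_subset_inter hKA (Set.iInter_mono fun i => Set.smul_set_mono hKA)

end TopologicalGroup

theorem stmt_2_general {G : Type*} [Group G] [TopologicalSpace G] [IsTopologicalGroup G]
    [CompactSpace G] [T2Space G] [MeasurableSpace G] [BorelSpace G]
    (μ : Measure G) [μ.IsHaarMeasure]
    (A : Set G) (hmeas : MeasurableSet A) (hpos : 0 < μ A)
    (k : ℕ) :
    ∃ U : Set G, IsOpen U ∧ (1 : G) ∈ U ∧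
      ∀ u : Fin k → G, (∀ i, u i ∈ U) → 0 < μ (A ∩ ⋂ i, u i • A) := by
  obtain ⟨V, hV, hVA⟩ :=
    exists_mem_nhds_one_measure_inter_iInter_smul_pos μ (ι := Fin k) hmeas hpos (measure_ne_top μ A)
  exact ⟨interior V, isOpen_interior, mem_interior_iff_mem_nhds.2 hV,
    fun u hu => hVA u fun i => interior_subset (hu i)⟩

theorem stmt_2 {G : Type*} [Group G] [TopologicalSpace G] [IsTopologicalGroup G]
    [CompactSpace G] [T2Space G] [MeasurableSpace G] [BorelSpace G]
    (μ : Measure G) [μ.IsHaarMeasure] [IsProbabilityMeasure μ]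
    (A : Set G) (hmeas : MeasurableSet A) (hpos : 0 < μ A)
    (k : ℕ) (hk : 0 < k) :
    ∃ U : Set G, IsOpen U ∧ (1 : G) ∈ U ∧
      ∀ u : Fin k → G, (∀ i, u i ∈ U) → 0 < μ (A ∩ ⋂ i, u i • A) :=
  stmt_2_general μ A hmeas hpos k
end

section
/- Let G be a group and α an automorphism of G. Suppose a, b, x ∈ G satisfy α(x) = x⁻¹, α(bx) = (bx)⁻¹, α(ax) = (ax)⁻¹, and α(abx) = (abx)⁻¹. Then a and b commute: [a,b] = 1. -/
/-! If `α` inverts both `x` and `y * x`, then `y ↦ x * α y * x⁻¹` inverts `y`. Applying this to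
`y = a, b, a * b` gives an endomorphism inverting `a`, `b` and `a * b`, and any such endomorphism
forces `a⁻¹ * b⁻¹ = (a * b)⁻¹ = b⁻¹ * a⁻¹`. -/

section

variable {G : Type*} [Group G]

theorem commute_of_map_eq_inv (f : G →* G) {a b : G} (ha : f a = a⁻¹) (hb : f b = b⁻¹)
    (hab : f (a * b) = (a * b)⁻¹) : Commute a b := by
  have h : (a * b)⁻¹ = (b * a)⁻¹ := by rw [← hab, map_mul, ha, hb, mul_inv_rev]
  exact inv_injective h

theorem conj_map_eq_inv_of_map_mul_eq_inv (f : G →* G) {x y : G} (hx : f x = x⁻¹)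
    (hyx : f (y * x) = (y * x)⁻¹) : x * f y * x⁻¹ = y⁻¹ := by
  rw [map_mul, hx, mul_inv_rev, mul_inv_eq_iff_eq_mul] at hyx
  rw [hyx]
  group

end

open scoped commutatorElement in
theorem stmt_4 {G : Type*} [Group G] (α : G ≃* G) (a b x : G)
    (hx : α x = x⁻¹) (hbx : α (b * x) = (b * x)⁻¹)
    (hax : α (a * x) = (a * x)⁻¹) (habx : α (a * b * x) = (a * b * x)⁻¹) :
    ⁅a, b⁆ = 1 := by
  let φ : G →* G := (MulAut.conj x).toMonoidHom.comp α.toMonoidHom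
  have inverts {y : G} (hyx : α (y * x) = (y * x)⁻¹) : φ y = y⁻¹ :=
    conj_map_eq_inv_of_map_mul_eq_inv α.toMonoidHom hx hyx
  exact (commute_of_map_eq_inv φ (inverts hax) (inverts hbx) (inverts habx)).commutator_eq
end

section
/- Let G be a compact Hausdorff topological group and α a (not necessarily continuous) automorphism of G such that the set X = {x ∈ G : α(x) = x⁻¹} is Haar-measurable with positive Haar measure. Then G contains an open normal abelian subgroup. -/
/-!
If `y`, `a * y`, `b * y` and `a * b * y` all lie in `X = {x | α x = x⁻¹}`, then `α g = y⁻¹ g⁻¹ y`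
for `g = a, b, a * b`, and multiplicativity of `α` forces `a * b = b * a`. Translation is
continuous in measure, so for `a`, `b` near `1` each of the translates of `X` by `a`, `b`, `a * b`
misses less than a third of `X`, and such a `y` exists. Hence some neighbourhood of `1` consists of
pairwise commuting elements; it generates an open abelian subgroup, whose normal core is open
since it has finite index in the compact group `G`.
-/

open MeasureTheory Filter Set
open scoped ENNReal symmDiff Topology

theorem commute_of_map_eq_inv_s5 {G F : Type*} [Group G] [FunLike F G G] [MulHomClass F G G]
    (α : F) {a b y : G} (hy : α y = y⁻¹) (ha : α (a * y) = (a * y)⁻¹)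
    (hb : α (b * y) = (b * y)⁻¹) (hab : α (a * b * y) = (a * b * y)⁻¹) :
    a * b = b * a := by
  have conj_inv : ∀ {g : G}, α (g * y) = (g * y)⁻¹ → α g = y⁻¹ * g⁻¹ * y := fun h ↦ by
    rwa [map_mul, hy, mul_inv_rev, mul_inv_eq_iff_eq_mul] at h
  have hconj := conj_inv hab
  rw [map_mul, conj_inv ha, conj_inv hb] at hconj
  have hinv : Commute a⁻¹ b⁻¹ := mul_right_cancel (b := y) (by simpa [mul_assoc] using hconj)
  exact (Commute.inv_inv_iff.mp hinv).eq

theorem nonempty_inter_of_measure_diff_lt {Ω : Type*} [MeasurableSpace Ω] {μ : Measure Ω}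
    {s t₁ t₂ t₃ : Set Ω} (h₁ : μ (s \ t₁) < μ s / 3) (h₂ : μ (s \ t₂) < μ s / 3)
    (h₃ : μ (s \ t₃) < μ s / 3) : (s ∩ t₁ ∩ t₂ ∩ t₃).Nonempty := by
  by_contra h
  have hcover : s ⊆ (s \ t₁) ∪ (s \ t₂) ∪ (s \ t₃) := fun x hx ↦ by
    by_contra hx'
    simp only [mem_union, Set.mem_sdiff, hx, true_and, not_or, not_not] at hx'
    exact h ⟨x, ⟨⟨⟨hx, hx'.1.1⟩, hx'.1.2⟩, hx'.2⟩⟩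
  have := calc
    μ s ≤ μ ((s \ t₁) ∪ (s \ t₂)) + μ (s \ t₃) := (measure_mono hcover).trans (measure_union_le _ _)
    _ ≤ μ (s \ t₁) + μ (s \ t₂) + μ (s \ t₃) := by gcongr; exact measure_union_le _ _
    _ < μ s / 3 + μ s / 3 + μ s / 3 := ENNReal.add_lt_add (ENNReal.add_lt_add h₁ h₂) h₃
    _ = μ s := ENNReal.add_thirds _
  exact this.false

section Translation

variable {G : Type*} [Group G] [TopologicalSpace G] [IsTopologicalGroup G]
  [MeasurableSpace G] [BorelSpace G] {μ : Measure G} [μ.IsMulLeftInvariant]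
  [μ.InnerRegularCompactLTTop] [IsLocallyFiniteMeasure μ] {s : Set G}

theorem tendsto_measure_preimage_mul_left_symmDiff (hs : NullMeasurableSet s μ)
    (hμs : μ s ≠ ∞) : Tendsto (fun g ↦ μ (((g * ·) ⁻¹' s) ∆ s)) (𝓝 1) (𝓝 0) := by
  let mulLeft : C(G, C(G, G)) :=
    (⟨fun p : G × G ↦ p.1 * p.2, continuous_mul⟩ : C(G × G, G)).curry
  have coe_mulLeft (g : G) : ⇑(mulLeft g) = (g * ·) := rfl
  simpa [coe_mulLeft] using tendsto_measure_symmDiff_preimage_nhds_zero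
    (mulLeft.continuous.tendsto 1) (.of_forall fun g ↦ measurePreserving_mul_left μ g)
    (measurePreserving_mul_left μ 1) hs hμs

theorem eventually_measure_diff_preimage_mul_left_lt (hs : NullMeasurableSet s μ)
    (hμs : μ s ≠ ∞) {ε : ℝ≥0∞} (hε : 0 < ε) : ∀ᶠ g in 𝓝 1, μ (s \ (g * ·) ⁻¹' s) < ε := by
  filter_upwards [(tendsto_order.1 (tendsto_measure_preimage_mul_left_symmDiff hs hμs)).2 ε hε]
    with g hg
  exact (measure_mono subset_union_right).trans_lt hg

theorem exists_mem_nhds_one_commute_of_measure_pos {F : Type*} [FunLike F G G]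
    [MulHomClass F G G] (α : F)
    (hX : NullMeasurableSet {x | α x = x⁻¹} μ) (hpos : 0 < μ {x | α x = x⁻¹})
    (hfin : μ {x | α x = x⁻¹} ≠ ∞) : ∃ W ∈ 𝓝 (1 : G), ∀ a ∈ W, ∀ b ∈ W, a * b = b * a := by
  set X := {x | α x = x⁻¹}
  have hV : ∀ᶠ g in 𝓝 1, μ (X \ (g * ·) ⁻¹' X) < μ X / 3 :=
    eventually_measure_diff_preimage_mul_left_lt hX hfin (ENNReal.div_pos hpos.ne' (by simp))
  obtain ⟨W, hW, hWV⟩ := exists_nhds_one_split hV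
  refine ⟨W ∩ {g | μ (X \ (g * ·) ⁻¹' X) < μ X / 3}, inter_mem hW hV, fun a ha b hb ↦ ?_⟩
  obtain ⟨y, ⟨⟨hy, hay⟩, hby⟩, haby⟩ :=
    nonempty_inter_of_measure_diff_lt ha.2 hb.2 (hWV a ha.1 b hb.1)
  exact commute_of_map_eq_inv_s5 α hy hay hby haby

end Translation

theorem exists_isOpen_normal_commutative_of_mem_nhds_one {G : Type*} [Group G]
    [TopologicalSpace G] [IsTopologicalGroup G] [CompactSpace G] {W : Set G} (hW : W ∈ 𝓝 1)
    (hcomm : ∀ a ∈ W, ∀ b ∈ W, a * b = b * a) :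
    ∃ H : Subgroup G, IsOpen (H : Set G) ∧ H.Normal ∧ ∀ a ∈ H, ∀ b ∈ H, a * b = b * a := by
  let U : OpenSubgroup G :=
    ⟨Subgroup.closure W, Subgroup.isOpen_of_mem_nhds _ (mem_of_superset hW Subgroup.subset_closure)⟩
  obtain ⟨N, hNU⟩ :=
    IsTopologicalGroup.exist_openNormalSubgroup_sub_clopen_nhds_of_one U.isClopen U.one_mem
  have := Subgroup.isMulCommutative_closure hcomm
  exact ⟨N.toSubgroup, N.isOpen, N.isNormal',
    fun a ha b hb ↦ setLike_mul_comm (s := U.toSubgroup) (hNU ha) (hNU hb)⟩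

theorem stmt_5_general {G : Type*} [Group G] [TopologicalSpace G] [IsTopologicalGroup G]
    [CompactSpace G] [MeasurableSpace G] [BorelSpace G]
    (μ : Measure G) [μ.IsHaarMeasure]
    (α : G ≃* G)
    (hmeas : MeasurableSet {x : G | α x = x⁻¹})
    (hpos : 0 < μ {x : G | α x = x⁻¹}) :
    ∃ H : Subgroup G, IsOpen (H : Set G) ∧ H.Normal ∧
      ∀ a ∈ H, ∀ b ∈ H, a * b = b * a := by
  obtain ⟨W, hW, hcomm⟩ := exists_mem_nhds_one_commute_of_measure_pos α hmeas.nullMeasurableSet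
    hpos (measure_ne_top μ _)
  exact exists_isOpen_normal_commutative_of_mem_nhds_one hW hcomm

theorem stmt_5 {G : Type*} [Group G] [TopologicalSpace G] [IsTopologicalGroup G]
    [CompactSpace G] [T2Space G] [MeasurableSpace G] [BorelSpace G]
    (μ : Measure G) [μ.IsHaarMeasure] [IsProbabilityMeasure μ]
    (α : G ≃* G)
    (hmeas : MeasurableSet {x : G | α x = x⁻¹})
    (hpos : 0 < μ {x : G | α x = x⁻¹}) :
    ∃ H : Subgroup G, IsOpen (H : Set G) ∧ H.Normal ∧
      ∀ a ∈ H, ∀ b ∈ H, a * b = b * a :=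
  stmt_5_general μ α hmeas hpos
end

section
/- Let G be a compact Hausdorff topological group such that the set X = {x ∈ G : x² = 1} has positive Haar measure. Then G contains an open normal abelian subgroup. -/
/-!
If `x` and `g * x` are both involutions, conjugation by `x` inverts `g`. Translation is
continuous in measure, so for `g`, `h` in a small neighbourhood `W` of `1` each of the translates
`g⁻¹ • X`, `h⁻¹ • X`, `(g * h)⁻¹ • X` misses less than a third of `X`. A point of `X` common to
all three inverts `g`, `h` and `g * h` under conjugation, which forces `g * h = h * g`. The open
subgroup generated by `W` is therefore abelian, and in a compact group it contains an open normal
subgroup.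
-/

open MeasureTheory Filter Topology Pointwise

theorem conj_eq_inv_of_sq_eq_one {G : Type*} [Group G] {x g : G} (hx : x ^ 2 = 1)
    (hgx : (g * x) ^ 2 = 1) : MulAut.conj x g = g⁻¹ := by
  rw [pow_two] at hx hgx
  calc MulAut.conj x g = g⁻¹ * (g * x * (g * x)) * (x * x)⁻¹ := by
        simp only [MulAut.conj_apply]; group
    _ = g⁻¹ := by rw [hx, hgx, inv_one, mul_one, mul_one]

theorem commute_of_map_eq_inv_s6 {G : Type*} [Group G] (f : G →* G) {g h : G}
    (hg : f g = g⁻¹) (hh : f h = h⁻¹) (hgh : f (g * h) = (g * h)⁻¹) : Commute g h := by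
  have : h⁻¹ * g⁻¹ = g⁻¹ * h⁻¹ := by rw [← mul_inv_rev, ← hgh, map_mul, hg, hh]
  exact Commute.inv_inv_iff.mp this.symm

theorem nonempty_inter_of_measure_sdiff_add_lt {α : Type*} [MeasurableSpace α] {μ : Measure α}
    {s a b c : Set α} (h : μ (s \ a) + μ (s \ b) + μ (s \ c) < μ s) :
    (s ∩ a ∩ b ∩ c).Nonempty := by
  by_contra hempty
  have hcover : s ⊆ (s \ a) ∪ (s \ b) ∪ (s \ c) := by
    intro x hx
    by_contra hx'
    simp only [Set.mem_union, Set.mem_sdiff, not_or, not_and, not_not] at hx'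
    exact hempty ⟨x, ⟨⟨hx, hx'.1.1 hx⟩, hx'.1.2 hx⟩, hx'.2 hx⟩
  refine h.not_ge ((measure_mono hcover).trans ?_)
  exact (measure_union_le _ _).trans (by gcongr; exact measure_union_le _ _)

theorem exists_mem_nhds_one_forall_mul_of_eventually {M : Type*} [Monoid M] [TopologicalSpace M]
    [ContinuousMul M] {p : M → Prop} (hp : ∀ᶠ g in 𝓝 1, p g) :
    ∃ W ∈ 𝓝 (1 : M), ∀ g ∈ W, ∀ h ∈ W, p g ∧ p h ∧ p (g * h) := by
  have hmul : Tendsto (fun q : M × M ↦ q.1 * q.2) (𝓝 1 ×ˢ 𝓝 1) (𝓝 1) := by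
    simpa [nhds_prod_eq] using tendsto_mul (a := (1 : M)) (b := 1)
  exact eventually_prod_self_iff.mp
    ((tendsto_fst.eventually hp).and ((tendsto_snd.eventually hp).and (hmul.eventually hp)))

theorem exists_mem_nhds_one_forall_commute_of_measure_sq_eq_one_pos {G : Type*} [Group G]
    [TopologicalSpace G] [IsTopologicalGroup G] [CompactSpace G] [T2Space G] [MeasurableSpace G]
    [BorelSpace G] (μ : Measure G) [μ.IsHaarMeasure] (hpos : 0 < μ {x : G | x ^ 2 = 1}) :
    ∃ W ∈ 𝓝 (1 : G), ∀ g ∈ W, ∀ h ∈ W, Commute g h := by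
  set X : Set G := {x : G | x ^ 2 = 1}
  have hX : IsClosed X := isClosed_eq (continuous_pow 2) continuous_const
  obtain ⟨W, hW, hsmall⟩ := exists_mem_nhds_one_forall_mul_of_eventually
    (eventually_nhds_one_measure_smul_sdiff_lt (μ := μ) hX.isCompact hX
      (ε := μ X / 3) (ENNReal.div_pos hpos.ne' ENNReal.ofNat_ne_top).ne')
  refine ⟨W, hW, fun g hg h hh ↦ ?_⟩
  obtain ⟨hg3, hh3, hgh3⟩ := hsmall g hg h hh
  have hthird : μ (X \ g⁻¹ • X) + μ (X \ h⁻¹ • X) + μ (X \ (g * h)⁻¹ • X) < μ X := by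
    simp only [measure_sdiff_inv_smul]
    calc _ < μ X / 3 + μ X / 3 + μ X / 3 := ENNReal.add_lt_add (ENNReal.add_lt_add hg3 hh3) hgh3
      _ = μ X := ENNReal.add_thirds _
  obtain ⟨x, ⟨⟨hx, hgx⟩, hhx⟩, hghx⟩ := nonempty_inter_of_measure_sdiff_add_lt hthird
  rw [Set.mem_inv_smul_set_iff] at hgx hhx hghx
  exact commute_of_map_eq_inv_s6 (MulAut.conj x) (conj_eq_inv_of_sq_eq_one hx hgx)
    (conj_eq_inv_of_sq_eq_one hx hhx) (conj_eq_inv_of_sq_eq_one hx hghx)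

theorem exists_openNormalSubgroup_forall_commute_of_mem_nhds_one {G : Type*} [Group G] [TopologicalSpace G]
    [IsTopologicalGroup G] [CompactSpace G] {W : Set G} (hW : W ∈ 𝓝 (1 : G))
    (hcomm : ∀ g ∈ W, ∀ h ∈ W, Commute g h) :
    ∃ H : OpenNormalSubgroup G, ∀ a ∈ H, ∀ b ∈ H, Commute a b := by
  let K := Subgroup.closure W
  have hK : IsOpen (K : Set G) :=
    K.isOpen_of_mem_nhds (Filter.mem_of_superset hW Subgroup.subset_closure)
  have := Subgroup.isMulCommutative_closure hcomm
  obtain ⟨H, hHK⟩ := IsTopologicalGroup.exist_openNormalSubgroup_sub_clopen_nhds_of_one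
    ⟨K.isClosed_of_isOpen hK, hK⟩ K.one_mem
  exact ⟨H, fun a ha b hb ↦ setLike_mul_comm (s := K) (hHK ha) (hHK hb)⟩

theorem stmt_6_general {G : Type*} [Group G] [TopologicalSpace G] [IsTopologicalGroup G]
    [CompactSpace G] [T2Space G] [MeasurableSpace G] [BorelSpace G]
    (μ : Measure G) [μ.IsHaarMeasure]
    (hpos : 0 < μ {x : G | x ^ 2 = 1}) :
    ∃ H : Subgroup G, IsOpen (H : Set G) ∧ H.Normal ∧
      ∀ a ∈ H, ∀ b ∈ H, a * b = b * a := by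
  obtain ⟨W, hW, hcomm⟩ := exists_mem_nhds_one_forall_commute_of_measure_sq_eq_one_pos μ hpos
  obtain ⟨H, hH⟩ := exists_openNormalSubgroup_forall_commute_of_mem_nhds_one hW hcomm
  exact ⟨H.toSubgroup, H.isOpen', H.isNormal', hH⟩

theorem stmt_6 {G : Type*} [Group G] [TopologicalSpace G] [IsTopologicalGroup G]
    [CompactSpace G] [T2Space G] [MeasurableSpace G] [BorelSpace G]
    (μ : Measure G) [μ.IsHaarMeasure] [IsProbabilityMeasure μ]
    (hpos : 0 < μ {x : G | x ^ 2 = 1}) :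
    ∃ H : Subgroup G, IsOpen (H : Set G) ∧ H.Normal ∧
      ∀ a ∈ H, ∀ b ∈ H, a * b = b * a :=
  stmt_6_general μ hpos
end

section
/- Let G be a profinite group having an automorphism α such that X = {x ∈ G : α(x) = x⁻¹} is measurable with positive Haar measure. Then there exist an open abelian subgroup A of G and an element t ∈ X such that tA ⊆ X. -/
/-!
If `t ∈ X`, then `t⁻¹X` is the set inverted by the automorphism `β x = t⁻¹ α(x) t`. So it suffices
to find an open subgroup `U` and `t ∈ X` such that `β` inverts more than three quarters of `U`.
These exist by a density argument: squeeze `X ⊇ K` compact and `K ⊆ O` open with `μ (O \ K)`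
small, and take `U` with `K U ⊆ O`; then some coset `tU` with `t ∈ K` lies mostly inside `K`.

If `β` inverts more than three quarters of `U`, any four left translates of the inverted part by
elements of `U` meet. Since `β` inverting `x`, `y` and `xy` forces `xy = yx`, this makes the
inverted elements of `U` commute with all of `U`, hence they are closed under products and inverses,
and two meeting translates show that they exhaust `U`.
-/

open MeasureTheory

namespace MonoidHom

variable {G : Type*} [Group G]

def invertedSet (β : G →* G) : Set G := {x | β x = x⁻¹}

variable {β : G →* G} {x y : G}

@[simp] lemma mem_invertedSet : x ∈ β.invertedSet ↔ β x = x⁻¹ := Iff.rfl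

lemma inv_mem_invertedSet (hx : x ∈ β.invertedSet) : x⁻¹ ∈ β.invertedSet := by
  simp_all

lemma mul_mem_invertedSet (hx : x ∈ β.invertedSet) (hy : y ∈ β.invertedSet)
    (hxy : Commute x y) : x * y ∈ β.invertedSet := by
  simp_all [hxy.inv_inv.eq]

lemma commute_of_mul_mem_invertedSet (hx : x ∈ β.invertedSet) (hy : y ∈ β.invertedSet)
    (hxy : x * y ∈ β.invertedSet) : Commute x y := by
  simp only [mem_invertedSet, map_mul] at hx hy hxy
  rw [hx, hy, ← mul_inv_rev, inv_inj] at hxy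
  exact hxy.symm

lemma preimage_mul_left_invertedSet {t : G} (ht : t ∈ β.invertedSet) :
    (t * ·) ⁻¹' β.invertedSet = ((MulAut.conj t⁻¹).toMonoidHom.comp β).invertedSet := by
  ext u
  simp only [mem_invertedSet] at ht
  simp only [Set.mem_preimage, mem_invertedSet, map_mul, ht, coe_comp, MulEquiv.coe_toMonoidHom,
    Function.comp_apply, MulAut.conj_apply, inv_inv, mul_inv_rev]
  constructor <;> intro h
  · rw [h]; group
  · rw [← h]; group

end MonoidHom

section InvertedMeasure

variable {G : Type*} [Group G] [MeasurableSpace G] [MeasurableMul G]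
  (μ : Measure G) [μ.IsMulLeftInvariant]

lemma exists_forall_mul_mem_of_nat_mul_measure_diff_lt (U : Subgroup G) {Z : Set G} {n : ℕ}
    (g : Fin n → G) (hg : ∀ i, g i ∈ U) (h : n * μ (U \ Z) < μ U) :
    ∃ x ∈ U, ∀ i, g i * x ∈ Z := by
  by_contra! hU
  have hcover : (U : Set G) ⊆ ⋃ i, (g i * ·) ⁻¹' (U \ Z) := fun x hx ↦ by
    obtain ⟨i, hi⟩ := hU x hx
    exact Set.mem_iUnion.2 ⟨i, U.mul_mem (hg i) hx, hi⟩
  refine (measure_mono hcover |>.trans (measure_iUnion_fintype_le μ _)).not_gt ?_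
  simpa only [measure_preimage_mul, Finset.sum_const, Finset.card_univ, Fintype.card_fin,
    nsmul_eq_mul] using h

variable {U : Subgroup G} {β : G →* G}

lemma MonoidHom.commute_of_four_mul_measure_diff_lt (h : 4 * μ (U \ β.invertedSet) < μ U)
    {u v : G} (hu : u ∈ U) (hv : v ∈ U) (hu' : u ∈ β.invertedSet) :
    Commute u v := by
  obtain ⟨x, -, hx⟩ := exists_forall_mul_mem_of_nat_mul_measure_diff_lt μ U ![1, u, v, u * v]
    (by simp [Fin.forall_fin_succ, hu, hv, U.mul_mem hu hv]) (by exact_mod_cast h)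
  simp only [Fin.forall_fin_succ, IsEmpty.forall_iff, Matrix.cons_val_zero,
    Matrix.cons_val_succ, one_mul, and_true] at hx
  obtain ⟨hx, hux, hvx, huvx⟩ := hx
  have hcomm_x : Commute u x := commute_of_mul_mem_invertedSet hu' hx hux
  have hcomm_vx : Commute u (v * x) :=
    commute_of_mul_mem_invertedSet hu' hvx (by rwa [← mul_assoc])
  refine mul_right_cancel (b := x) ?_
  calc u * v * x = v * x * u := by rw [mul_assoc, hcomm_vx.eq]
    _ = v * u * x := by rw [mul_assoc, ← hcomm_x.eq, mul_assoc]

lemma MonoidHom.subset_invertedSet_of_four_mul_measure_diff_lt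
    (h : 4 * μ (U \ β.invertedSet) < μ U) : (U : Set G) ⊆ β.invertedSet := by
  intro g (hg : g ∈ U)
  have h2 : (2 : ℕ) * μ (U \ β.invertedSet) < μ U :=
    lt_of_le_of_lt (by gcongr; norm_num) h
  obtain ⟨x, hxU, hx⟩ := exists_forall_mul_mem_of_nat_mul_measure_diff_lt μ U ![1, g⁻¹]
    (by simp [Fin.forall_fin_succ, hg]) h2
  simp only [Fin.forall_fin_succ, IsEmpty.forall_iff, Matrix.cons_val_zero,
    Matrix.cons_val_succ, one_mul, and_true] at hx
  obtain ⟨hx, hgx⟩ := hx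
  have hgxU : (g⁻¹ * x)⁻¹ ∈ U := U.inv_mem (U.mul_mem (U.inv_mem hg) hxU)
  simpa using mul_mem_invertedSet hx (inv_mem_invertedSet hgx)
    (commute_of_four_mul_measure_diff_lt μ h hxU hgxU hx)

end InvertedMeasure

lemma exists_nat_mul_measure_inter_lt {α ι : Type*} [MeasurableSpace α] (μ : Measure α)
    [Finite ι] (f : α → ι) (hf : ∀ i, MeasurableSet (f ⁻¹' {i})) {A B : Set α} {n : ℕ}
    (h : n * μ A < μ B) : ∃ i, n * μ (f ⁻¹' {i} ∩ A) < μ (f ⁻¹' {i} ∩ B) := by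
  cases nonempty_fintype ι
  have hsum (C : Set α) : ∑ i, μ (f ⁻¹' {i} ∩ C) = μ C := by
    simpa [Measure.restrict_apply (hf _)] using
      sum_measure_preimage_singleton (μ := μ.restrict C) Finset.univ fun i _ ↦ hf i
  obtain ⟨i, -, hi⟩ := Finset.exists_lt_of_sum_lt (s := .univ)
    (f := fun i ↦ n * μ (f ⁻¹' {i} ∩ A)) (g := fun i ↦ μ (f ⁻¹' {i} ∩ B)) <| by
    rwa [← Finset.mul_sum, hsum, hsum]
  exact ⟨i, hi⟩

theorem exists_openSubgroup_nat_mul_measure_diff_lt {G : Type*} [Group G] [TopologicalSpace G]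
    [IsTopologicalGroup G] [CompactSpace G] [TotallyDisconnectedSpace G]
    [MeasurableSpace G] [BorelSpace G] (μ : Measure G) [μ.IsHaarMeasure]
    {X : Set G} (hX : MeasurableSet X) (hpos : 0 < μ X) (n : ℕ) :
    ∃ U : OpenSubgroup G, ∃ t ∈ X, n * μ ((U : Set G) \ (t * ·) ⁻¹' X) < μ U := by
  obtain ⟨K, hKX, hK, hKpos⟩ := hX.exists_lt_isCompact hpos
  obtain ⟨ε, hε, hεK⟩ := ENNReal.exists_pos_mul_lt (ENNReal.natCast_ne_top n) hKpos.ne'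
  obtain ⟨O, hKO, hO, -, hOK⟩ :=
    hK.measurableSet.exists_isOpen_sdiff_lt (measure_ne_top μ K) hε.ne'
  obtain ⟨V, hV, hKV⟩ := compact_open_separated_mul_right hK hO hKO
  obtain ⟨W, hWV, hW, hW1⟩ := mem_nhds_iff.1 hV
  obtain ⟨N, hNW⟩ := ProfiniteGrp.exist_openNormalSubgroup_sub_open_nhds_of_one hW hW1
  set U := N.toOpenSubgroup
  have hfiber (c : G ⧸ U.toSubgroup) : MeasurableSet (QuotientGroup.mk ⁻¹' {c}) :=
    ((isOpen_discrete {c}).preimage continuous_quotient_mk').measurableSet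
  obtain ⟨c, hc⟩ := exists_nat_mul_measure_inter_lt μ _ hfiber (A := O \ K)
    ((by gcongr : n * μ (O \ K) ≤ n * ε).trans_lt (mul_comm ε n ▸ hεK))
  set C := (QuotientGroup.mk : G → G ⧸ U.toSubgroup) ⁻¹' {c}
  obtain ⟨t, htC, htK⟩ := nonempty_of_measure_ne_zero (pos_of_gt hc).ne'
  obtain rfl : (t : G ⧸ U.toSubgroup) = c := htC
  have hCt : (t * ·) ⁻¹' C = U := by
    ext u
    simp [C]
  have hCO : C ⊆ O := fun x hx ↦ by
    have hx : t⁻¹ * x ∈ U := QuotientGroup.eq.1 (hx : (x : G ⧸ U.toSubgroup) = t).symm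
    simpa using hKV (Set.mul_mem_mul htK (hWV (hNW hx)))
  refine ⟨U, t, hKX htK, ?_⟩
  calc n * μ ((U : Set G) \ (t * ·) ⁻¹' X) = n * μ (C \ X) := by
        rw [← hCt, ← Set.preimage_sdiff, measure_preimage_mul]
    _ ≤ n * μ (C ∩ (O \ K)) := by
        gcongr
        exact fun x ⟨hxC, hxX⟩ ↦ ⟨hxC, hCO hxC, fun hxK ↦ hxX (hKX hxK)⟩
    _ < μ (C ∩ K) := hc
    _ ≤ μ C := measure_mono Set.inter_subset_left
    _ = μ U := by rw [← hCt, measure_preimage_mul]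

theorem stmt_7_general {G : Type*} [Group G] [TopologicalSpace G] [IsTopologicalGroup G]
    [CompactSpace G] [TotallyDisconnectedSpace G]
    [MeasurableSpace G] [BorelSpace G]
    (μ : Measure G) [μ.IsHaarMeasure]
    (α : G ≃* G)
    (hmeas : MeasurableSet {x : G | α x = x⁻¹})
    (hpos : 0 < μ {x : G | α x = x⁻¹}) :
    ∃ A : Subgroup G, IsOpen (A : Set G) ∧ (∀ a ∈ A, ∀ b ∈ A, a * b = b * a) ∧
      ∃ t ∈ {x : G | α x = x⁻¹}, ∀ a ∈ A, t * a ∈ {x : G | α x = x⁻¹} := by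
  obtain ⟨U, t, ht, hU⟩ := exists_openSubgroup_nat_mul_measure_diff_lt μ hmeas hpos 4
  set β := (MulAut.conj t⁻¹).toMonoidHom.comp α.toMonoidHom
  have hβ : (t * ·) ⁻¹' {x : G | α x = x⁻¹} = β.invertedSet :=
    MonoidHom.preimage_mul_left_invertedSet (β := α.toMonoidHom) ht
  replace hU : 4 * μ (U \ β.invertedSet) < μ U := by exact_mod_cast hβ ▸ hU
  have hUβ := MonoidHom.subset_invertedSet_of_four_mul_measure_diff_lt μ hU
  refine ⟨U, U.isOpen, fun a ha b hb ↦ ?_, t, ht, fun a ha ↦ ?_⟩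
  · exact MonoidHom.commute_of_four_mul_measure_diff_lt μ hU ha hb (hUβ ha)
  · exact (hβ ▸ hUβ ha : a ∈ (t * ·) ⁻¹' {x : G | α x = x⁻¹})

theorem stmt_7 {G : Type*} [Group G] [TopologicalSpace G] [IsTopologicalGroup G]
    [CompactSpace G] [T2Space G] [TotallyDisconnectedSpace G]
    [MeasurableSpace G] [BorelSpace G]
    (μ : Measure G) [μ.IsHaarMeasure] [IsProbabilityMeasure μ]
    (α : G ≃* G)
    (hmeas : MeasurableSet {x : G | α x = x⁻¹})
    (hpos : 0 < μ {x : G | α x = x⁻¹}) :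
    ∃ A : Subgroup G, IsOpen (A : Set G) ∧ (∀ a ∈ A, ∀ b ∈ A, a * b = b * a) ∧
      ∃ t ∈ {x : G | α x = x⁻¹}, ∀ a ∈ A, t * a ∈ {x : G | α x = x⁻¹} :=
  stmt_7_general μ α hmeas hpos
end

section
/- In any group, if elements a, b, x satisfy x³ = (bx)³ = (ax)³ = (a⁻¹x)³ = (ab⁻¹x)³ = (ba⁻¹x)³ = (abx)³ = (b⁻¹a⁻¹x)³ = 1, then [a,b,b] = 1. -/
open scoped commutatorElement

/-!
In the free group on `a, b, x` the Engel word `[a,b,b]` is a product of twelve conjugates of the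
eight cubes and their inverses (`commutatorElement_commutatorElement_eq`). So `[a,b,b]` lies in the
normal closure of the cubes, which is trivial as soon as every cube is `1`.
-/

section EngelWord

variable {G : Type*} [Group G]

def engelCubes (a b x : G) : Set G :=
  {x ^ 3, (b * x) ^ 3, (a * x) ^ 3, (a⁻¹ * x) ^ 3, (a * b⁻¹ * x) ^ 3, (b * a⁻¹ * x) ^ 3,
    (a * b * x) ^ 3, (b⁻¹ * a⁻¹ * x) ^ 3}

theorem commutatorElement_commutatorElement_eq (a b x : G) :
    ⁅⁅a, b⁆, b⁆ =
      (a * b * a⁻¹) * (b * x) ^ 3 * (a * b * a⁻¹)⁻¹ *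
      ((a * b * a⁻¹ * x⁻¹ * b⁻¹ * x⁻¹ * b⁻¹) * ((b * a⁻¹ * x) ^ 3)⁻¹ *
        (a * b * a⁻¹ * x⁻¹ * b⁻¹ * x⁻¹ * b⁻¹)⁻¹) *
      ((a * b * a⁻¹ * x⁻¹ * b⁻¹) * (x ^ 3)⁻¹ * (a * b * a⁻¹ * x⁻¹ * b⁻¹)⁻¹) *
      ((a * b * a⁻¹ * x⁻¹ * b⁻¹ * x * x) * (a⁻¹ * x) ^ 3 * (a * b * a⁻¹ * x⁻¹ * b⁻¹ * x * x)⁻¹) *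
      ((a * b * a⁻¹) * ((a * x) ^ 3)⁻¹ * (a * b * a⁻¹)⁻¹) *
      ((a * b * x * a * x) * (a * b⁻¹ * x) ^ 3 * (a * b * x * a * x)⁻¹) *
      (a * b * x) ^ 3 *
      ((x⁻¹ * b⁻¹ * a⁻¹) * ((a * x) ^ 3)⁻¹ * (x⁻¹ * b⁻¹ * a⁻¹)⁻¹) *
      ((x⁻¹ * b⁻¹ * x * a * b) * ((b⁻¹ * a⁻¹ * x) ^ 3)⁻¹ * (x⁻¹ * b⁻¹ * x * a * b)⁻¹) *
      ((x⁻¹ * b⁻¹ * x * x * b⁻¹) * (a⁻¹ * x) ^ 3 * (x⁻¹ * b⁻¹ * x * x * b⁻¹)⁻¹) *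
      ((x⁻¹ * b⁻¹) * x ^ 3 * (x⁻¹ * b⁻¹)⁻¹) *
      ((b * x) ^ 3)⁻¹ := by
  simp only [pow_three]
  group

theorem commutatorElement_commutatorElement_mem_normalClosure (a b x : G) :
    ⁅⁅a, b⁆, b⁆ ∈ Subgroup.normalClosure (engelCubes a b x) := by
  set N := Subgroup.normalClosure (engelCubes a b x)
  have cube_mem {r : G} (hr : r ∈ engelCubes a b x) : r ∈ N := Subgroup.subset_normalClosure hr
  have conj_mem {r : G} (hr : r ∈ engelCubes a b x) (c : G) : c * r * c⁻¹ ∈ N :=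
    Subgroup.normalClosure_normal.conj_mem r (cube_mem hr) c
  have conj_inv_mem {r : G} (hr : r ∈ engelCubes a b x) (c : G) : c * r⁻¹ * c⁻¹ ∈ N :=
    Subgroup.normalClosure_normal.conj_mem _ (inv_mem (cube_mem hr)) c
  rw [commutatorElement_commutatorElement_eq a b x]
  -- Reducible transparency: otherwise the conjugation lemmas match factors only up to unfolding.
  repeat' with_reducible first
    | apply conj_inv_mem
    | apply conj_mem
    | apply inv_mem
    | apply mul_mem
    | apply cube_mem
  all_goals simp [engelCubes]

end EngelWord

theorem stmt_8 {G : Type*} [Group G] (a b x : G)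
    (h1 : x ^ 3 = 1) (h2 : (b * x) ^ 3 = 1) (h3 : (a * x) ^ 3 = 1)
    (h4 : (a⁻¹ * x) ^ 3 = 1) (h5 : (a * b⁻¹ * x) ^ 3 = 1)
    (h6 : (b * a⁻¹ * x) ^ 3 = 1) (h7 : (a * b * x) ^ 3 = 1)
    (h8 : (b⁻¹ * a⁻¹ * x) ^ 3 = 1) :
    ⁅⁅a, b⁆, b⁆ = 1 := by
  have cubes_trivial : Subgroup.normalClosure (engelCubes a b x) = ⊥ := by
    rw [Subgroup.normalClosure_eq_bot_iff]
    rintro r (rfl | rfl | rfl | rfl | rfl | rfl | rfl | rfl) <;> assumption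
  simpa [cubes_trivial] using commutatorElement_commutatorElement_mem_normalClosure a b x
end

section
/- Every 2-Engel group is nilpotent of class at most 3. -/
/-!
In a 2-Engel group every element commutes with all of its conjugates, so the normal closure of
an element is abelian and `u ↦ ⁅u, c⁆` is multiplicative on it. Expanding
`⁅⁅p, a * b⁆, a * b⁆ = 1` with this shows that `⁅⁅x, y⁆, z⁆` is inverted by every transposition of
its arguments, hence invariant under rotation, and the Hall–Witt identity then gives
`⁅⁅x, y⁆, z⁆ ^ 3 = 1`. Consequently `⁅⁅⁅a, b⁆, c⁆, d⁆` is inverted by every transposition, and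
computing `⁅⁅d, c⁆, ⁅a, b⁆⁆` in two ways shows that its square is trivial, while multiplicativity in
the first argument shows that its cube is trivial. So all commutators of weight four vanish, that is,
`G` equals the third term `Z₃(G)` of its upper central series, which is equivalent to `γ₄(G) = 1`.
-/

open scoped commutatorElement

open Subgroup

section AbelianNormal

variable {G : Type*} [Group G] {N : Subgroup G}

theorem commutatorElement_mem_of_mem_left [N.Normal] {u : G} (hu : u ∈ N) (c : G) :
    ⁅u, c⁆ ∈ N :=
  commutator_le_left N ⊤ (commutator_mem_commutator hu (mem_top c))

theorem commutatorElement_mem_of_mem_right [N.Normal] {u : G} (hu : u ∈ N) (c : G) :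
    ⁅c, u⁆ ∈ N :=
  commutator_le_right ⊤ N (commutator_mem_commutator (mem_top c) hu)

theorem commutatorElement_mem_normalClosure_left (a b : G) : ⁅a, b⁆ ∈ normalClosure {a} :=
  commutatorElement_mem_of_mem_left (subset_normalClosure (Set.mem_singleton a)) b

theorem commutatorElement_mem_normalClosure_right (a b : G) : ⁅a, b⁆ ∈ normalClosure {b} :=
  commutatorElement_mem_of_mem_right (subset_normalClosure (Set.mem_singleton b)) a

variable [N.Normal] [IsMulCommutative N]

theorem commutatorElement_mul_left_of_mem {u v : G} (hu : u ∈ N) (hv : v ∈ N) (c : G) :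
    ⁅u * v, c⁆ = ⁅u, c⁆ * ⁅v, c⁆ := by
  have hvc := commutatorElement_mem_of_mem_left hv c
  rw [commutatorElement_mul_left_eq_conj_mul, setLike_mul_comm hu hvc,
    mul_inv_cancel_right, setLike_mul_comm hvc (commutatorElement_mem_of_mem_left hu c)]

theorem commutatorElement_pow_left_of_mem {u : G} (hu : u ∈ N) (c : G) (n : ℕ) :
    ⁅u ^ n, c⁆ = ⁅u, c⁆ ^ n := by
  induction n with
  | zero => simp
  | succ n ih =>
    rw [pow_succ, commutatorElement_mul_left_of_mem (pow_mem hu n) hu, ih, pow_succ]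

end AbelianNormal

def IsTwoEngel (G : Type*) [Group G] : Prop :=
  ∀ x y : G, ⁅⁅x, y⁆, y⁆ = 1

namespace IsTwoEngel

variable {G : Type*} [Group G]

theorem commute_commutatorElement (hG : IsTwoEngel G) (a b : G) : Commute ⁅a, b⁆ b :=
  commutatorElement_eq_one_iff_commute.mp (hG a b)

theorem commutatorElement_inv_left (hG : IsTwoEngel G) (a b : G) : ⁅a⁻¹, b⁆ = ⁅a, b⁆⁻¹ := by
  rw [_root_.commutatorElement_inv_left, mul_assoc, (hG.commute_commutatorElement b a).eq,
    inv_mul_cancel_left, commutatorElement_inv]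

theorem commute_conj_self (hG : IsTwoEngel G) (x g : G) : Commute x (g * x * g⁻¹) := by
  rw [show g * x * g⁻¹ = ⁅g, x⁆ * x by group]
  exact (hG.commute_commutatorElement g x).symm.mul_right (Commute.refl x)

theorem isMulCommutative_normalClosure_singleton (hG : IsTwoEngel G) (x : G) :
    IsMulCommutative (normalClosure {x}) := by
  refine isMulCommutative_closure ?_
  simp only [Group.mem_conjugatesOfSet_iff, Set.mem_singleton_iff, exists_eq_left, isConj_iff]
  rintro _ ⟨g, rfl⟩ _ ⟨k, rfl⟩
  have := hG.commute_conj_self (k * x * k⁻¹) (g * k⁻¹)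
  rw [show g * k⁻¹ * (k * x * k⁻¹) * (g * k⁻¹)⁻¹ = g * x * g⁻¹ by group] at this
  exact this.symm.eq

theorem commute_of_mem_normalClosure (hG : IsTwoEngel G) {x w : G}
    (hw : w ∈ normalClosure {x}) : Commute w x :=
  have := hG.isMulCommutative_normalClosure_singleton x
  setLike_mul_comm hw (subset_normalClosure (Set.mem_singleton _))

theorem commute_commutatorElement_commutatorElement (hG : IsTwoEngel G) (p a b : G) :
    Commute ⁅⁅p, a⁆, b⁆ a :=
  hG.commute_of_mem_normalClosure <|
    commutatorElement_mem_of_mem_left (commutatorElement_mem_normalClosure_right p a) b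

theorem commutatorElement_commutatorElement_right_comm (hG : IsTwoEngel G) (p a b : G) :
    ⁅⁅p, a⁆, b⁆ = ⁅⁅p, b⁆, a⁆⁻¹ := by
  -- expand `⁅⁅p, a * b⁆, a * b⁆ = 1`, using that `⁅-, c⁆` is multiplicative on the abelian
  -- normal closure of `p`
  have := hG.isMulCommutative_normalClosure_singleton p
  have hpa := commutatorElement_mem_normalClosure_left p a
  have hpb := commutatorElement_mem_normalClosure_left p b
  have ht : ⁅⁅p, b⁆, a⁆⁻¹ ∈ normalClosure {p} := inv_mem (commutatorElement_mem_of_mem_left hpb a)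
  have hu : ⁅p, a * b⁆ = ⁅p, a⁆ * ⁅⁅p, b⁆, a⁆⁻¹ * ⁅p, b⁆ := by group
  have hua : ⁅⁅p, a * b⁆, a⁆ = ⁅⁅p, b⁆, a⁆ := by
    rw [hu, commutatorElement_mul_left_of_mem (mul_mem hpa ht) hpb,
      commutatorElement_mul_left_of_mem hpa ht, hG p a, hG.commutatorElement_inv_left,
      hG ⁅p, b⁆ a, inv_one, one_mul, one_mul]
  have hub : ⁅⁅p, a * b⁆, b⁆ = ⁅⁅p, a⁆, b⁆ := by
    rw [hu, commutatorElement_mul_left_of_mem (mul_mem hpa ht) hpb,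
      commutatorElement_mul_left_of_mem hpa ht, hG p b, hG.commutatorElement_inv_left,
      (hG.commute_commutatorElement_commutatorElement p b a).commutator_eq, inv_one, mul_one,
      mul_one]
  have engel := hG p (a * b)
  rw [show ⁅⁅p, a * b⁆, a * b⁆
      = ⁅⁅p, a * b⁆, a⁆ * ⁅⁅⁅p, a * b⁆, b⁆, a⁆⁻¹ * ⁅⁅p, a * b⁆, b⁆ by group,
    hua, hub, (hG.commute_commutatorElement_commutatorElement p a b).commutator_eq, inv_one,
    mul_one] at engel
  exact eq_inv_of_mul_eq_one_right engel

theorem commutatorElement_commutatorElement_left_comm (hG : IsTwoEngel G) (a b c : G) :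
    ⁅⁅b, a⁆, c⁆ = ⁅⁅a, b⁆, c⁆⁻¹ := by
  rw [← commutatorElement_inv a b, hG.commutatorElement_inv_left]

theorem commutatorElement_commutatorElement_rotate (hG : IsTwoEngel G) (a b c : G) :
    ⁅⁅a, b⁆, c⁆ = ⁅⁅b, c⁆, a⁆ := by
  rw [hG.commutatorElement_commutatorElement_right_comm b c a,
    hG.commutatorElement_commutatorElement_left_comm a b c, inv_inv]

theorem conj_commutatorElement_commutatorElement_inv (hG : IsTwoEngel G) (a b c : G) :
    a * ⁅⁅a⁻¹, b⁆, c⁆ * a⁻¹ = ⁅⁅a, b⁆, c⁆⁻¹ := by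
  rw [hG.commutatorElement_inv_left, hG.commutatorElement_inv_left,
    ← (hG.commute_of_mem_normalClosure (commutatorElement_mem_of_mem_left
      (commutatorElement_mem_normalClosure_left a b) c)).inv_left.eq, mul_inv_cancel_right]

theorem commutatorElement_commutatorElement_pow_three (hG : IsTwoEngel G) (a b c : G) :
    ⁅⁅a, b⁆, c⁆ ^ 3 = 1 := by
  have hallWitt : (a * ⁅⁅a⁻¹, b⁆, c⁆ * a⁻¹) * (c * ⁅⁅c⁻¹, a⁆, b⁆ * c⁻¹)
      * (b * ⁅⁅b⁻¹, c⁆, a⁆ * b⁻¹) = 1 := by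
    simpa only [mul_assoc] using conj_commutatorElement_left_commutatorElement_mul a b c
  rw [hG.conj_commutatorElement_commutatorElement_inv,
    hG.conj_commutatorElement_commutatorElement_inv,
    hG.conj_commutatorElement_commutatorElement_inv,
    hG.commutatorElement_commutatorElement_rotate c a b,
    ← hG.commutatorElement_commutatorElement_rotate a b c] at hallWitt
  rw [← inv_eq_one, ← inv_pow, ← hallWitt, pow_three, mul_assoc]

theorem commutatorElement_commutatorElement_reverse (hG : IsTwoEngel G) (a b w : G) :
    ⁅⁅a, b⁆, w⁆ = ⁅⁅w, b⁆, a⁆⁻¹ := by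
  rw [hG.commutatorElement_commutatorElement_rotate,
    hG.commutatorElement_commutatorElement_left_comm]

theorem commutatorElement_commutatorElement_commutatorElement_sq (hG : IsTwoEngel G)
    (a b c d : G) : ⁅⁅⁅a, b⁆, c⁆, d⁆ ^ 2 = 1 := by
  have swap12 (x y z w : G) : ⁅⁅⁅y, x⁆, z⁆, w⁆ = ⁅⁅⁅x, y⁆, z⁆, w⁆⁻¹ := by
    rw [hG.commutatorElement_commutatorElement_left_comm x y z, hG.commutatorElement_inv_left]
  have swap23 (x y z w : G) : ⁅⁅⁅x, z⁆, y⁆, w⁆ = ⁅⁅⁅x, y⁆, z⁆, w⁆⁻¹ := by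
    rw [hG.commutatorElement_commutatorElement_right_comm x z y, hG.commutatorElement_inv_left]
  have swap34 (x y z w : G) : ⁅⁅⁅x, y⁆, w⁆, z⁆ = ⁅⁅⁅x, y⁆, z⁆, w⁆⁻¹ :=
    hG.commutatorElement_commutatorElement_right_comm ⁅x, y⁆ w z
  -- reversing four letters is an even permutation
  have reverse : ⁅⁅⁅d, c⁆, b⁆, a⁆ = ⁅⁅⁅a, b⁆, c⁆, d⁆ := by
    rw [swap12 c d b a, swap23 c b d a, swap34 c b a d, swap12 b c a d, swap23 b a c d,
      swap12 a b c d]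
    simp only [inv_inv]
  -- both sides are `⁅⁅d, c⁆, ⁅a, b⁆⁆`, by `commutatorElement_commutatorElement_reverse`
  have hinv : ⁅⁅⁅a, b⁆, c⁆, d⁆⁻¹ = ⁅⁅⁅d, c⁆, b⁆, a⁆ := by
    rw [← hG.commutatorElement_commutatorElement_reverse, ← commutatorElement_inv,
      hG.commutatorElement_commutatorElement_reverse, inv_inv]
  rw [sq, mul_eq_one_iff_eq_inv, hinv, reverse]

theorem commutatorElement_commutatorElement_commutatorElement_pow_three (hG : IsTwoEngel G)
    (a b c d : G) : ⁅⁅⁅a, b⁆, c⁆, d⁆ ^ 3 = 1 := by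
  have := hG.isMulCommutative_normalClosure_singleton ⁅⁅a, b⁆, c⁆
  rw [← commutatorElement_pow_left_of_mem (subset_normalClosure (Set.mem_singleton _)),
    hG.commutatorElement_commutatorElement_pow_three, commutatorElement_one_left]

theorem commutatorElement_commutatorElement_commutatorElement_eq_one (hG : IsTwoEngel G)
    (a b c d : G) : ⁅⁅⁅a, b⁆, c⁆, d⁆ = 1 := by
  have h3 := hG.commutatorElement_commutatorElement_commutatorElement_pow_three a b c d
  rwa [pow_succ, hG.commutatorElement_commutatorElement_commutatorElement_sq, one_mul] at h3

end IsTwoEngel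

theorem stmt_9 {G : Type*} [Group G]
    (h : ∀ x y : G, ⁅⁅x, y⁆, y⁆ = 1) :
    (⊤ : Subgroup G).lowerCentralSeries 3 = ⊥ := by
  have hG : IsTwoEngel G := h
  rw [lowerCentralSeries_eq_bot_iff_upperCentralSeries_eq_top, eq_top_iff]
  intro x _ y z w
  exact mem_bot.mpr (hG.commutatorElement_commutatorElement_commutatorElement_eq_one x y z w)
end

section
/- There exists a positive integer ℓ such that every group generated by a symmetric subset X = X⁻¹ containing the identity, with the property that [x,y,y] = 1 for all x, y ∈ X^ℓ, is a 2-Engel group. -/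
open Pointwise
open scoped commutatorElement

/-!
For `b ∈ X ^ s` let `conjClosure X b K` be the subgroup generated by the conjugates `w b w⁻¹`
with `w ∈ X ^ K`. The hypothesis says that `b` commutes with its conjugates by short words, so this
subgroup is abelian as long as `s` and `2 K` are at most `ℓ`. Commuting elements of such abelian
subgroups inside the expansion of `⁅⁅x, y z⁆, y z⁆ = 1` yields, for short words, the identities of
2-Engel groups: `⁅⁅x, y⁆, z⁆` changes to its inverse when two adjacent arguments are swapped, and is
unchanged when one argument is conjugated by a short word. For `x, y, z ∈ X` the element
`⁅⁅x, y⁆, z⁆` is therefore centralised by every generator, so `G` has nilpotency class at most 3 and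
`⁅⁅g, h⁆, k⁆` is central and multiplicative in each argument. Both the antisymmetry in the last two
arguments and `⁅⁅g, h⁆, h⁆ = 1` then propagate from the generators to all of `G`. The local
identities need words of total length at most `ℓ / 2`, and conjugating three generators by a
fourth uses total length 9, whence `ℓ = 18`.
-/

namespace TwoEngel

open Subgroup

variable {G : Type*} [Group G]

section Commutator

theorem commute_conj_of_commutatorElement_commutatorElement_eq_one {u v : G}
    (h : ⁅⁅u, v⁆, v⁆ = 1) : Commute (u * v * u⁻¹) v := by
  have := (commutatorElement_eq_one_iff_commute.mp h).mul_left (Commute.refl v)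
  rwa [commutatorElement_def, inv_mul_cancel_right] at this

theorem commutatorElement_eq_one_of_mem_center {z : G} (hz : z ∈ center G) (c : G) :
    ⁅z, c⁆ = 1 :=
  commutatorElement_eq_one_iff_commute.mpr (mem_center_iff.mp hz c).symm

theorem commutatorElement_mul_left_of_mem_center {b c : G} (h : ⁅b, c⁆ ∈ center G) (a : G) :
    ⁅a * b, c⁆ = ⁅a, c⁆ * ⁅b, c⁆ := by
  rw [commutatorElement_mul_left_eq_conj_mul, Commute.mul_inv_cancel (mem_center_iff.mp h a),
    mem_center_iff.mp h]

theorem commutatorElement_mul_right_of_mem_center {a c : G} (h : ⁅a, c⁆ ∈ center G) (b : G) :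
    ⁅a, b * c⁆ = ⁅a, b⁆ * ⁅a, c⁆ := by
  rw [commutatorElement_mul_right_eq_mul_conj, mul_assoc, mul_assoc,
    Commute.mul_inv_cancel_assoc (mem_center_iff.mp h b)]

theorem commutatorElement_mul_mul_of_mem_center {z c k : G} (hz : z ∈ center G)
    (hc : ⁅c, k⁆ ∈ center G) (a : G) : ⁅a * z * c, k⁆ = ⁅a, k⁆ * ⁅c, k⁆ := by
  have hzk := commutatorElement_eq_one_of_mem_center hz k
  rw [commutatorElement_mul_left_of_mem_center hc,
    commutatorElement_mul_left_of_mem_center (hzk ▸ one_mem _), hzk, mul_one]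

end Commutator

section Pow

variable {X : Set G} {m n : ℕ} {a b : G}

theorem mul_mem_pow (ha : a ∈ X ^ m) (hb : b ∈ X ^ n) : a * b ∈ X ^ (m + n) :=
  pow_add X m n ▸ Set.mul_mem_mul ha hb

theorem inv_mem_pow_of_inv_eq (hX : X⁻¹ = X) (ha : a ∈ X ^ n) : a⁻¹ ∈ X ^ n := by
  rw [← hX, inv_pow]
  exact Set.inv_mem_inv.mpr ha

end Pow

/-- `X ^ ℓ` is the ball of radius `ℓ` in the word metric of `X`. -/
structure IsTwoEngelOnBall (X : Set G) (ℓ : ℕ) : Prop where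
  one_mem : (1 : G) ∈ X
  inv_eq : X⁻¹ = X
  engel : ∀ x ∈ X ^ ℓ, ∀ y ∈ X ^ ℓ, ⁅⁅x, y⁆, y⁆ = 1

def conjClosure (X : Set G) (b : G) (K : ℕ) : Subgroup G :=
  closure ((fun w => w * b * w⁻¹) '' X ^ K)

section ConjClosure

variable {X : Set G} {b u w : G} {k m K : ℕ}

theorem conjClosure_mono (h1 : (1 : G) ∈ X) (h : k ≤ K) : conjClosure X b k ≤ conjClosure X b K :=
  closure_mono (Set.image_mono (Set.pow_subset_pow_right h1 h))

theorem conj_mem_conjClosure (h1 : (1 : G) ∈ X) (hw : w ∈ X ^ m) (hm : m ≤ K) :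
    w * b * w⁻¹ ∈ conjClosure X b K :=
  subset_closure ⟨w, Set.pow_subset_pow_right h1 hm hw, rfl⟩

theorem mem_conjClosure_self (h1 : (1 : G) ∈ X) : b ∈ conjClosure X b K := by
  simpa using conj_mem_conjClosure (b := b) h1 (Set.one_mem_pow h1 (n := K)) le_rfl

theorem conj_mem_conjClosure_of_mem (hw : w ∈ X ^ m) (hu : u ∈ conjClosure X b k) :
    w * u * w⁻¹ ∈ conjClosure X b (m + k) := by
  have : (conjClosure X b k).map (MulAut.conj w).toMonoidHom ≤ conjClosure X b (m + k) := by
    rw [conjClosure, MonoidHom.map_closure, closure_le]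
    rintro _ ⟨_, ⟨v, hv, rfl⟩, rfl⟩
    exact subset_closure ⟨w * v, mul_mem_pow hw hv, by simp [mul_assoc]⟩
  exact this ⟨u, hu, rfl⟩

theorem commutatorElement_mem_conjClosure_left (h1 : (1 : G) ∈ X) (hw : w ∈ X ^ m)
    (hm : m ≤ K) : ⁅w, b⁆ ∈ conjClosure X b K :=
  mul_mem (conj_mem_conjClosure h1 hw hm) (inv_mem (mem_conjClosure_self h1))

theorem commutatorElement_mem_conjClosure_right (h1 : (1 : G) ∈ X) (hw : w ∈ X ^ m)
    (hm : m ≤ K) : ⁅b, w⁆ ∈ conjClosure X b K := by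
  rw [← commutatorElement_inv]
  exact inv_mem (commutatorElement_mem_conjClosure_left h1 hw hm)

theorem commutatorElement_mem_conjClosure (h1 : (1 : G) ∈ X) (hu : u ∈ conjClosure X b k)
    (hw : w ∈ X ^ m) : ⁅u, w⁆ ∈ conjClosure X b (m + k) := by
  rw [commutatorElement_def, mul_assoc, mul_assoc, ← mul_assoc w]
  exact mul_mem (conjClosure_mono h1 (Nat.le_add_left k m) hu)
    (conj_mem_conjClosure_of_mem hw (inv_mem hu))

end ConjClosure

namespace IsTwoEngelOnBall

variable {X : Set G} {ℓ : ℕ} (hX : IsTwoEngelOnBall X ℓ)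
variable {p q r s : ℕ} {b u v x y z t : G}
include hX

theorem mem_pow_of_le (hu : u ∈ X ^ p) (h : p ≤ q) : u ∈ X ^ q :=
  Set.pow_subset_pow_right hX.one_mem h hu

theorem inv_mul_mul_mem_pow (hz : z ∈ X ^ s) (hy : y ∈ X ^ q) : z⁻¹ * y * z ∈ X ^ (s + q + s) :=
  mul_mem_pow (mul_mem_pow (inv_mem_pow_of_inv_eq hX.inv_eq hz) hy) hz

theorem engel_of_le (hu : u ∈ X ^ p) (hv : v ∈ X ^ q) (hp : p ≤ ℓ) (hq : q ≤ ℓ) :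
    ⁅⁅u, v⁆, v⁆ = 1 :=
  hX.engel u (hX.mem_pow_of_le hu hp) v (hX.mem_pow_of_le hv hq)

theorem commute_of_mem_conjClosure (hb : b ∈ X ^ s) (hs : s ≤ ℓ) {K : ℕ} (hK : 2 * K ≤ ℓ)
    (hu : u ∈ conjClosure X b K) (hv : v ∈ conjClosure X b K) : Commute u v := by
  have : IsMulCommutative (conjClosure X b K) := isMulCommutative_closure <| by
    rintro _ ⟨u, hu, rfl⟩ _ ⟨w, hw, rfl⟩
    have hc := commute_conj_of_commutatorElement_commutatorElement_eq_one <|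
      hX.engel_of_le (mul_mem_pow (inv_mem_pow_of_inv_eq hX.inv_eq hw) hu) hb (by omega) hs
    calc u * b * u⁻¹ * (w * b * w⁻¹)
        = w * ((w⁻¹ * u) * b * (w⁻¹ * u)⁻¹ * b) * w⁻¹ := by group
      _ = w * (b * ((w⁻¹ * u) * b * (w⁻¹ * u)⁻¹)) * w⁻¹ := by rw [hc.eq]
      _ = w * b * w⁻¹ * (u * b * u⁻¹) := by group
  exact setLike_mul_comm hu hv

theorem comm_comm_swap_right (hx : x ∈ X ^ p) (hy : y ∈ X ^ q) (hz : z ∈ X ^ r)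
    (hℓ : 2 * (p + q + r) ≤ ℓ) : ⁅⁅x, z⁆, y⁆ = ⁅⁅x, y⁆, z⁆⁻¹ := by
  have h1 := hX.one_mem
  have hxy : Commute ⁅x, y⁆ y :=
    commutatorElement_eq_one_iff_commute.mp (hX.engel_of_le hx hy (by omega) (by omega))
  have hze : Commute z ⁅⁅x, z⁆, y⁆ :=
    hX.commute_of_mem_conjClosure hz (by omega) (K := q + p) (by omega)
      (mem_conjClosure_self h1)
      (commutatorElement_mem_conjClosure h1
        (commutatorElement_mem_conjClosure_left h1 hx le_rfl) hy)
  have hxye : Commute ⁅x, y⁆ ⁅⁅x, z⁆, y⁆ :=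
    hX.commute_of_mem_conjClosure hx (by omega) (K := q + r) (by omega)
      (commutatorElement_mem_conjClosure_right h1 hy (by omega))
      (commutatorElement_mem_conjClosure h1
        (commutatorElement_mem_conjClosure_right h1 hz le_rfl) hy)
  have hexp : ⁅x, y⁆ * y * (⁅⁅x, z⁆, z⁆ * (z * ⁅⁅x, z⁆, y⁆ * z⁻¹)) * (⁅x, y⁆ * y)⁻¹ *
      (⁅⁅x, y⁆, y⁆ * (y * ⁅⁅x, y⁆, z⁆ * y⁻¹)) = 1 := by
    rw [← hX.engel_of_le hx (mul_mem_pow hy hz) (by omega) (by omega)]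
    simp only [commutatorElement_def]
    group
  rw [hX.engel_of_le hx hz (by omega) (by omega), hX.engel_of_le hx hy (by omega) (by omega),
    one_mul, one_mul, hze.mul_inv_cancel, hxy.eq] at hexp
  have : y * (⁅x, y⁆ * ⁅⁅x, z⁆, y⁆ * ⁅x, y⁆⁻¹ * ⁅⁅x, y⁆, z⁆) * y⁻¹ = 1 := by
    rw [← hexp]; group
  rw [hxye.mul_inv_cancel, conj_eq_one_iff] at this
  exact eq_inv_of_mul_eq_one_left this

theorem comm_comm_conj_middle (hx : x ∈ X ^ p) (hy : y ∈ X ^ q) (hz : z ∈ X ^ s)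
    (ht : t ∈ X ^ r) (hℓ : 2 * (p + q + 2 * s + r) ≤ ℓ) :
    ⁅⁅x, z⁻¹ * y * z⁆, t⁆ = ⁅⁅x, y⁆, t⁆ := by
  have h1 := hX.one_mem
  have hy' := hX.inv_mul_mul_mem_pow hz hy
  have hzc : Commute z ⁅x, z⁆ :=
    (commutatorElement_eq_one_iff_commute.mp (hX.engel_of_le hx hz (by omega) (by omega))).symm
  have hcd : Commute ⁅x, z⁆ ⁅⁅x, z⁻¹ * y * z⁆, t⁆ :=
    hX.commute_of_mem_conjClosure hx (by omega) (K := r + (s + q + s)) (by omega)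
      (commutatorElement_mem_conjClosure_right h1 hz (by omega))
      (commutatorElement_mem_conjClosure h1
        (commutatorElement_mem_conjClosure_right h1 hy' le_rfl) ht)
  have hconj : z * ⁅⁅x, y⁆, t⁆ * z⁻¹ =
      ⁅x, z⁆ * (z * ⁅⁅x, z⁻¹ * y * z⁆, t⁆ * z⁻¹) * ⁅x, z⁆⁻¹ := by
    refine mul_left_cancel (a := ⁅⁅x, y⁆, z⁆) ?_
    calc ⁅⁅x, y⁆, z⁆ * (z * ⁅⁅x, y⁆, t⁆ * z⁻¹)
        = ⁅⁅x, y⁆, z * t⁆ := by simp only [commutatorElement_def]; group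
      _ = ⁅⁅x, z * t⁆, y⁆⁻¹ := by
        rw [hX.comm_comm_swap_right hx hy (mul_mem_pow hz ht) (by omega), inv_inv]
      _ = ((⁅x, z⁆ * (z * ⁅⁅x, t⁆, z⁻¹ * y * z⁆ * z⁻¹) * ⁅x, z⁆⁻¹) * ⁅⁅x, z⁆, y⁆)⁻¹ := by
        simp only [commutatorElement_def]; group
      _ = ⁅⁅x, y⁆, z⁆ * (⁅x, z⁆ * (z * ⁅⁅x, z⁻¹ * y * z⁆, t⁆ * z⁻¹) * ⁅x, z⁆⁻¹) := by
        rw [hX.comm_comm_swap_right hx hy' ht (by omega),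
          hX.comm_comm_swap_right hx hy hz (by omega)]
        group
  calc ⁅⁅x, z⁻¹ * y * z⁆, t⁆
      = (z⁻¹ * ⁅x, z⁆ * z) * ⁅⁅x, z⁻¹ * y * z⁆, t⁆ * (z⁻¹ * ⁅x, z⁆ * z)⁻¹ := by
        rw [hzc.inv_mul_cancel, hcd.mul_inv_cancel]
    _ = z⁻¹ * (⁅x, z⁆ * (z * ⁅⁅x, z⁻¹ * y * z⁆, t⁆ * z⁻¹) * ⁅x, z⁆⁻¹) * z := by group
    _ = ⁅⁅x, y⁆, t⁆ := by rw [← hconj]; group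

theorem comm_comm_swap_left (hx : x ∈ X ^ p) (hy : y ∈ X ^ q) (ht : t ∈ X ^ r)
    (hℓ : 2 * (p + q + r) ≤ ℓ) : ⁅⁅y, x⁆, t⁆ = ⁅⁅x, y⁆, t⁆⁻¹ := by
  have h1 := hX.one_mem
  have hcomm : Commute ⁅y, x⁆ ⁅⁅y, x⁆, t⁆ :=
    hX.commute_of_mem_conjClosure hx (by omega) (K := r + q) (by omega)
      (commutatorElement_mem_conjClosure_left h1 hy (by omega))
      (commutatorElement_mem_conjClosure h1
        (commutatorElement_mem_conjClosure_left h1 hy le_rfl) ht)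
  rw [← commutatorElement_inv y x, commutatorElement_inv_left, ← commutatorElement_inv ⁅y, x⁆ t,
    hcomm.inv_right.inv_mul_cancel, inv_inv]

theorem comm_comm_conj_left (hx : x ∈ X ^ p) (hy : y ∈ X ^ q) (hz : z ∈ X ^ s)
    (ht : t ∈ X ^ r) (hℓ : 2 * (p + q + 2 * s + r) ≤ ℓ) :
    ⁅⁅z⁻¹ * x * z, y⁆, t⁆ = ⁅⁅x, y⁆, t⁆ := by
  rw [hX.comm_comm_swap_left hy (hX.inv_mul_mul_mem_pow hz hx) ht (by omega),
    hX.comm_comm_conj_middle hy hx hz ht (by omega), hX.comm_comm_swap_left hx hy ht (by omega),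
    inv_inv]

theorem comm_comm_conj_right (hx : x ∈ X ^ p) (hy : y ∈ X ^ q) (hz : z ∈ X ^ s)
    (ht : t ∈ X ^ r) (hℓ : 2 * (p + q + 2 * s + r) ≤ ℓ) :
    ⁅⁅x, y⁆, z⁻¹ * t * z⁆ = ⁅⁅x, y⁆, t⁆ := by
  rw [hX.comm_comm_swap_right hx (hX.inv_mul_mul_mem_pow hz ht) hy (by omega),
    hX.comm_comm_conj_middle hx ht hz hy (by omega), hX.comm_comm_swap_right hx hy ht (by omega),
    inv_inv]

theorem commute_comm_comm (hx : x ∈ X) (hy : y ∈ X) (hz : z ∈ X) (ht : t ∈ X) (hℓ : 18 ≤ ℓ) :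
    Commute ⁅⁅x, y⁆, z⁆ t := by
  rw [← pow_one X] at hx hy hz ht
  have hconj : t⁻¹ * ⁅⁅x, y⁆, z⁆ * t = ⁅⁅x, y⁆, z⁆ := by
    calc t⁻¹ * ⁅⁅x, y⁆, z⁆ * t = ⁅⁅t⁻¹ * x * t, t⁻¹ * y * t⁆, t⁻¹ * z * t⁆ := by
          simp only [commutatorElement_def]; group
      _ = ⁅⁅x, y⁆, z⁆ := by
        rw [hX.comm_comm_conj_left hx (hX.inv_mul_mul_mem_pow ht hy) ht
            (hX.inv_mul_mul_mem_pow ht hz) (by omega),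
          hX.comm_comm_conj_middle hx hy ht (hX.inv_mul_mul_mem_pow ht hz) (by omega),
          hX.comm_comm_conj_right hx hy ht hz (by omega)]
  calc ⁅⁅x, y⁆, z⁆ * t = t * (t⁻¹ * ⁅⁅x, y⁆, z⁆ * t) := by group
    _ = t * ⁅⁅x, y⁆, z⁆ := by rw [hconj]

end IsTwoEngelOnBall

section Generators

variable {X : Set G} (hX : closure X = ⊤)
include hX

theorem mem_upperCentralSeries_succ_of_closure_eq_top {n : ℕ} {u : G}
    (h : ∀ x ∈ X, ⁅u, x⁆ ∈ Subgroup.upperCentralSeries G n) :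
    u ∈ Subgroup.upperCentralSeries G (n + 1) := by
  rw [Subgroup.mem_upperCentralSeries_succ_iff]
  intro g
  induction (hX ▸ mem_top g : g ∈ closure X) using closure_induction with
  | mem x hx => exact h x hx
  | one => simp
  | mul a b _ _ ha hb =>
    rw [commutatorElement_mul_right_eq_mul_conj, mul_assoc, mul_assoc, ← mul_assoc a]
    exact mul_mem ha (Normal.conj_mem inferInstance _ hb a)
  | inv a _ ha =>
    rw [commutatorElement_inv_right, ← commutatorElement_inv]
    exact Normal.conj_mem' inferInstance _ (inv_mem ha) a

theorem comm_comm_mem_center (h : ∀ x ∈ X, ∀ y ∈ X, ∀ z ∈ X, ∀ t ∈ X, Commute ⁅⁅x, y⁆, z⁆ t)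
    (g k m : G) : ⁅⁅g, k⁆, m⁆ ∈ center G := by
  have hX3 : Subgroup.upperCentralSeries G 3 = ⊤ := by
    rw [eq_top_iff, ← hX, closure_le]
    refine fun x hx => mem_upperCentralSeries_succ_of_closure_eq_top hX fun y hy => ?_
    refine mem_upperCentralSeries_succ_of_closure_eq_top hX fun z hz => ?_
    refine mem_upperCentralSeries_succ_of_closure_eq_top hX fun t ht => ?_
    rw [Subgroup.upperCentralSeries_zero, mem_bot, commutatorElement_eq_one_iff_commute]
    exact h x hx y hy z hz t ht
  have hg : g ∈ Subgroup.upperCentralSeries G 3 := hX3 ▸ mem_top g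
  rw [← Subgroup.upperCentralSeries_one]
  exact Subgroup.mem_upperCentralSeries_succ_iff.mp
    (Subgroup.mem_upperCentralSeries_succ_iff.mp hg k) m

theorem eq_one_of_map_mul {M : Type*} [Group M] {f : G → M}
    (hmul : ∀ a b, f (a * b) = f a * f b) (h : ∀ x ∈ X, f x = 1) (g : G) : f g = 1 :=
  DFunLike.congr_fun (MonoidHom.eq_of_eqOn_dense hX (f := MonoidHom.mk' f hmul) (g := 1) h) g

end Generators

section ClassThree

variable (hγ : ∀ g h k : G, ⁅⁅g, h⁆, k⁆ ∈ center G)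
include hγ

theorem comm_comm_mul_right (g h k k' : G) : ⁅⁅g, h⁆, k * k'⁆ = ⁅⁅g, h⁆, k⁆ * ⁅⁅g, h⁆, k'⁆ :=
  commutatorElement_mul_right_of_mem_center (hγ g h k') k

theorem comm_comm_mul_middle (g h h' k : G) : ⁅⁅g, h * h'⁆, k⁆ = ⁅⁅g, h⁆, k⁆ * ⁅⁅g, h'⁆, k⁆ := by
  have hz : ⁅h, ⁅g, h'⁆⁆ ∈ center G := by
    rw [← commutatorElement_inv]; exact inv_mem (hγ g h' h)
  have hexp : ⁅g, h * h'⁆ = ⁅g, h⁆ * ⁅h, ⁅g, h'⁆⁆ * ⁅g, h'⁆ := by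
    simp only [commutatorElement_def]; group
  rw [hexp, commutatorElement_mul_mul_of_mem_center hz (hγ g h' k)]

theorem comm_comm_mul_left (g g' h k : G) : ⁅⁅g * g', h⁆, k⁆ = ⁅⁅g, h⁆, k⁆ * ⁅⁅g', h⁆, k⁆ := by
  have hz : ⁅⁅g', h⁆⁻¹, g⁆ ∈ center G := by
    rw [commutatorElement_inv]; exact hγ h g' g
  have hexp : ⁅g * g', h⁆ = ⁅g', h⁆ * ⁅⁅g', h⁆⁻¹, g⁆ * ⁅g, h⁆ := by
    simp only [commutatorElement_def]; group
  rw [hexp, commutatorElement_mul_mul_of_mem_center hz (hγ g h k), mem_center_iff.mp (hγ g h k)]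

variable {X : Set G} (hX : closure X = ⊤)
include hX

theorem comm_comm_mul_swap_eq_one
    (hswap : ∀ x ∈ X, ∀ y ∈ X, ∀ z ∈ X, ⁅⁅x, y⁆, z⁆ * ⁅⁅x, z⁆, y⁆ = 1) {x : G} (hx : x ∈ X)
    (g h : G) : ⁅⁅x, g⁆, h⁆ * ⁅⁅x, h⁆, g⁆ = 1 := by
  have hcomm (a b c d : G) : Commute ⁅⁅x, a⁆, b⁆ ⁅⁅x, c⁆, d⁆ := mem_center_iff.mp (hγ x c d) _
  refine eq_one_of_map_mul hX (f := fun g => ⁅⁅x, g⁆, h⁆ * ⁅⁅x, h⁆, g⁆) (fun a b => ?_)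
    (fun y hy => ?_) g
  · simp only [comm_comm_mul_middle hγ, comm_comm_mul_right hγ]
    exact (hcomm _ _ _ _).mul_mul_mul_comm _ _
  · refine eq_one_of_map_mul hX (f := fun h => ⁅⁅x, y⁆, h⁆ * ⁅⁅x, h⁆, y⁆) (fun a b => ?_)
      (hswap x hx y hy) h
    simp only [comm_comm_mul_middle hγ, comm_comm_mul_right hγ]
    exact (hcomm _ _ _ _).mul_mul_mul_comm _ _

theorem comm_comm_self_eq_one
    (hswap : ∀ x ∈ X, ∀ y ∈ X, ∀ z ∈ X, ⁅⁅x, y⁆, z⁆ * ⁅⁅x, z⁆, y⁆ = 1)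
    (hself : ∀ x ∈ X, ∀ y ∈ X, ⁅⁅x, y⁆, y⁆ = 1) (g h : G) : ⁅⁅g, h⁆, h⁆ = 1 := by
  refine eq_one_of_map_mul hX (f := fun g => ⁅⁅g, h⁆, h⁆)
    (fun a b => comm_comm_mul_left hγ a b h h) (fun x hx => ?_) g
  refine eq_one_of_map_mul hX (f := fun h => ⁅⁅x, h⁆, h⁆) (fun a b => ?_) (hself x hx) h
  simp only [comm_comm_mul_middle hγ, comm_comm_mul_right hγ, mul_assoc]
  rw [← mul_assoc ⁅⁅x, a⁆, b⁆, comm_comm_mul_swap_eq_one hγ hX hswap hx, one_mul]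

end ClassThree

end TwoEngel

theorem stmt_11 :
    ∃ ℓ : ℕ, 0 < ℓ ∧
      ∀ (G : Type) (_ : Group G) (X : Set G),
        (1 : G) ∈ X → X⁻¹ = X →
        (∀ x ∈ X ^ ℓ, ∀ y ∈ X ^ ℓ, ⁅⁅x, y⁆, y⁆ = 1) →
        Subgroup.closure X = ⊤ →
        ∀ g h : G, ⁅⁅g, h⁆, h⁆ = 1 := by
  refine ⟨18, by norm_num, fun G _ X h1 hinv hengel hX => ?_⟩
  have hX' : TwoEngel.IsTwoEngelOnBall X 18 := ⟨h1, hinv, hengel⟩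
  have hgen {x : G} (hx : x ∈ X) : x ∈ X ^ 1 := by rwa [pow_one]
  refine TwoEngel.comm_comm_self_eq_one ?_ hX ?_ ?_
  · exact TwoEngel.comm_comm_mem_center hX fun x hx y hy z hz t ht =>
      hX'.commute_comm_comm hx hy hz ht le_rfl
  · intro x hx y hy z hz
    rw [hX'.comm_comm_swap_right (hgen hx) (hgen hz) (hgen hy) (by norm_num), inv_mul_cancel]
  · exact fun x hx y hy => hX'.engel_of_le (hgen hx) (hgen hy) (by norm_num) (by norm_num)
end

section
/- Let G be a nilpotent group of class at most 3 generated by a symmetric set X = X⁻¹ containing 1, and suppose [x,y,z][x,z,y] = 1 and [x,y,y] = 1 for all x, y, z ∈ X. Then G is 2-Engel, i.e., [g,h,h] = 1 for all g, h ∈ G. -/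
/-!
In a group of class at most 3 the triple commutator `⁅⁅a, b⁆, c⁆` is central, and expanding
`⁅a, b * c⁆ = ⁅a, b⁆ * b ⁅a, c⁆ b⁻¹` (Mathlib's convention `⁅a, b⁆ = a b a⁻¹ b⁻¹`) shows that
it is multiplicative in each of its three arguments. So it is a trilinear map into the centre,
and a multilinear identity that holds on a generating set holds everywhere; this gives
`⁅⁅g, y⁆, z⁆ * ⁅⁅g, z⁆, y⁆ = 1` for all `g y z`. The Engel word `h ↦ ⁅⁅g, h⁆, h⁆` is quadratic
in `h` with exactly that product as its polarization, so it is multiplicative in `h` as well and,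
vanishing on the generators, vanishes on `G`.
-/

open Pointwise
open scoped commutatorElement
-- makes `Subgroup.center G` a `CommGroup`, so that homomorphisms into it can be multiplied
open scoped IsMulCommutative

theorem Subgroup.conj_eq_self_of_mem_center {G : Type*} [Group G] {z : G}
    (hz : z ∈ Subgroup.center G) (u : G) : u * z * u⁻¹ = z := by
  rw [Subgroup.mem_center_iff.mp hz, mul_inv_cancel_right]

section ClassThree

variable {G : Type*} [Group G] (hnil : (⊤ : Subgroup G).lowerCentralSeries 3 = ⊥)
include hnil

theorem commutatorElement_commutatorElement_mem_center (a b c : G) :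
    ⁅⁅a, b⁆, c⁆ ∈ Subgroup.center G := by
  have step : ∀ n (p q : G), p ∈ (⊤ : Subgroup G).lowerCentralSeries n →
      ⁅p, q⁆ ∈ (⊤ : Subgroup G).lowerCentralSeries (n + 1) :=
    fun _ _ q hp => Subgroup.commutator_mem_commutator hp (Subgroup.mem_top q)
  refine Subgroup.mem_center_iff.mpr fun g =>
    ((commutatorElement_eq_one_iff_commute ..).mp ?_).symm.eq
  have h := step 2 _ g (step 1 _ c (step 0 a b (Subgroup.mem_top a)))
  rwa [hnil, Subgroup.mem_bot] at h

theorem commutatorElement_commutatorElement_mul_right (a b c d : G) :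
    ⁅⁅a, b⁆, c * d⁆ = ⁅⁅a, b⁆, c⁆ * ⁅⁅a, b⁆, d⁆ := by
  rw [commutatorElement_mul_right_eq_mul_conj, mul_assoc _ c, mul_assoc,
    Subgroup.conj_eq_self_of_mem_center (commutatorElement_commutatorElement_mem_center hnil a b d)]

def tripleCommutatorHomRight (a b : G) : G →* Subgroup.center G :=
  MonoidHom.mk' (fun c => ⟨⁅⁅a, b⁆, c⁆, commutatorElement_commutatorElement_mem_center hnil a b c⟩)
    fun c d => Subtype.ext (commutatorElement_commutatorElement_mul_right hnil a b c d)

theorem commutatorElement_commutatorElement_conj_right (a b d u : G) :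
    ⁅⁅a, b⁆, u⁻¹ * d * u⁆ = ⁅⁅a, b⁆, d⁆ := by
  change (tripleCommutatorHomRight hnil a b (u⁻¹ * d * u) : G) = tripleCommutatorHomRight hnil a b d
  rw [map_mul, map_mul, map_inv, inv_mul_cancel_comm]

theorem commutatorElement_commutatorElement_mul_middle (a b c d : G) :
    ⁅⁅a, b * c⁆, d⁆ = ⁅⁅a, b⁆, d⁆ * ⁅⁅a, c⁆, d⁆ := by
  have key : ⁅⁅a, b * c⁆, d⁆ =
      ⁅a, b⁆ * (b * ⁅⁅a, c⁆, b⁻¹ * d * b⁆ * b⁻¹) * ⁅a, b⁆⁻¹ * ⁅⁅a, b⁆, d⁆ := by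
    simp only [commutatorElement_def]; group
  have hcen := commutatorElement_commutatorElement_mem_center hnil a c d
  rw [key, commutatorElement_commutatorElement_conj_right hnil,
    Subgroup.conj_eq_self_of_mem_center hcen, Subgroup.conj_eq_self_of_mem_center hcen,
    Subgroup.mem_center_iff.mp hcen]

theorem commutatorElement_commutatorElement_mul_left (a b c d : G) :
    ⁅⁅a * b, c⁆, d⁆ = ⁅⁅a, c⁆, d⁆ * ⁅⁅b, c⁆, d⁆ := by
  have key : ⁅⁅a * b, c⁆, d⁆ =
      (a * ⁅b, c⁆ * a⁻¹) * ⁅⁅a, c⁆, d⁆ * (a * ⁅b, c⁆ * a⁻¹)⁻¹ *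
        (a * ⁅⁅b, c⁆, a⁻¹ * d * a⁆ * a⁻¹) := by
    simp only [commutatorElement_def]; group
  rw [key, commutatorElement_commutatorElement_conj_right hnil,
    Subgroup.conj_eq_self_of_mem_center (commutatorElement_commutatorElement_mem_center hnil ..),
    Subgroup.conj_eq_self_of_mem_center (commutatorElement_commutatorElement_mem_center hnil ..)]

def tripleCommutatorHomMiddle (a d : G) : G →* Subgroup.center G :=
  MonoidHom.mk' (fun b => ⟨⁅⁅a, b⁆, d⁆, commutatorElement_commutatorElement_mem_center hnil a b d⟩)
    fun b c => Subtype.ext (commutatorElement_commutatorElement_mul_middle hnil a b c d)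

def tripleCommutatorHomLeft (c d : G) : G →* Subgroup.center G :=
  MonoidHom.mk' (fun a => ⟨⁅⁅a, c⁆, d⁆, commutatorElement_commutatorElement_mem_center hnil a c d⟩)
    fun a b => Subtype.ext (commutatorElement_commutatorElement_mul_left hnil a b c d)

theorem commutatorElement_commutatorElement_inv_right (a b c : G) :
    ⁅⁅a, b⁆, c⁻¹⁆ = ⁅⁅a, b⁆, c⁆⁻¹ :=
  congrArg Subtype.val (map_inv (tripleCommutatorHomRight hnil a b) c)

theorem commutatorElement_commutatorElement_inv_middle (a b d : G) :
    ⁅⁅a, b⁻¹⁆, d⁆ = ⁅⁅a, b⁆, d⁆⁻¹ :=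
  congrArg Subtype.val (map_inv (tripleCommutatorHomMiddle hnil a d) b)

end ClassThree

theorem MonoidHom.coe_apply_eq_one_of_closure_eq_top {G : Type*} [Group G] {X : Set G}
    (hgen : Subgroup.closure X = ⊤) {H : Subgroup G} (f : G →* H) (hX : ∀ x ∈ X, (f x : G) = 1)
    (g : G) : (f g : G) = 1 := by
  rw [MonoidHom.eq_of_eqOn_dense hgen (g := 1) fun x hx => Subtype.ext (hX x hx)]
  rfl

theorem commutatorElement_commutatorElement_mul_swap_eq_one {G : Type*} [Group G] {X : Set G}
    (hgen : Subgroup.closure X = ⊤) (hnil : (⊤ : Subgroup G).lowerCentralSeries 3 = ⊥)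
    (hswap : ∀ x ∈ X, ∀ y ∈ X, ∀ z ∈ X, ⁅⁅x, y⁆, z⁆ * ⁅⁅x, z⁆, y⁆ = 1) (g y z : G) :
    ⁅⁅g, y⁆, z⁆ * ⁅⁅g, z⁆, y⁆ = 1 := by
  have hz : ∀ x ∈ X, ∀ y ∈ X, ∀ z, ⁅⁅x, y⁆, z⁆ * ⁅⁅x, z⁆, y⁆ = 1 := fun x hx y hy =>
    MonoidHom.coe_apply_eq_one_of_closure_eq_top hgen
      (tripleCommutatorHomRight hnil x y * tripleCommutatorHomMiddle hnil x y) (hswap x hx y hy)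
  have hyz : ∀ x ∈ X, ∀ y z : G, ⁅⁅x, y⁆, z⁆ * ⁅⁅x, z⁆, y⁆ = 1 := fun x hx y z =>
    MonoidHom.coe_apply_eq_one_of_closure_eq_top hgen
      (tripleCommutatorHomMiddle hnil x z * tripleCommutatorHomRight hnil x z)
      (fun y hy => hz x hx y hy z) y
  exact MonoidHom.coe_apply_eq_one_of_closure_eq_top hgen
    (tripleCommutatorHomLeft hnil y z * tripleCommutatorHomLeft hnil z y)
    (fun x hx => hyz x hx y z) g

theorem stmt_12_general {G : Type*} [Group G] (X : Set G)
    (hgen : Subgroup.closure X = ⊤)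
    (hnil : lowerCentralSeries (⊤ : Subgroup G) 3 = ⊥)
    (hswap : ∀ x ∈ X, ∀ y ∈ X, ∀ z ∈ X, ⁅⁅x, y⁆, z⁆ * ⁅⁅x, z⁆, y⁆ = 1)
    (hengel : ∀ x ∈ X, ∀ y ∈ X, ⁅⁅x, y⁆, y⁆ = 1) :
    ∀ g h : G, ⁅⁅g, h⁆, h⁆ = 1 := by
  have hswap' := commutatorElement_commutatorElement_mul_swap_eq_one hgen hnil hswap
  have hengel' : ∀ h ∈ X, ∀ g, ⁅⁅g, h⁆, h⁆ = 1 := fun h hh =>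
    MonoidHom.coe_apply_eq_one_of_closure_eq_top hgen (tripleCommutatorHomLeft hnil h h)
      fun x hx => hengel x hx h hh
  intro g h
  induction (hgen ▸ Subgroup.mem_top h : h ∈ Subgroup.closure X)
    using Subgroup.closure_induction with
  | mem h hh => exact hengel' h hh g
  | one => exact commutatorElement_one_right _
  | mul u v _ _ hu hv =>
    rw [commutatorElement_commutatorElement_mul_middle hnil,
      commutatorElement_commutatorElement_mul_right hnil,
      commutatorElement_commutatorElement_mul_right hnil, hu, hv, one_mul, mul_one]
    exact hswap' g u v
  | inv u _ hu =>
    rw [commutatorElement_commutatorElement_inv_middle hnil,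
      commutatorElement_commutatorElement_inv_right hnil, inv_inv, hu]

theorem stmt_12 {G : Type*} [Group G] (X : Set G)
    (h1 : (1 : G) ∈ X) (hsym : X⁻¹ = X)
    (hgen : Subgroup.closure X = ⊤)
    (hnil : lowerCentralSeries (⊤ : Subgroup G) 3 = ⊥)
    (hswap : ∀ x ∈ X, ∀ y ∈ X, ∀ z ∈ X, ⁅⁅x, y⁆, z⁆ * ⁅⁅x, z⁆, y⁆ = 1)
    (hengel : ∀ x ∈ X, ∀ y ∈ X, ⁅⁅x, y⁆, y⁆ = 1) :
    ∀ g h : G, ⁅⁅g, h⁆, h⁆ = 1 :=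
  stmt_12_general X hgen hnil hswap hengel
end

section
/- Let G be a compact Hausdorff group, K an open abelian subgroup, α an automorphism of G, and X = {x ∈ G : α(x) = x⁻¹} a closed set. If t ∈ X is such that A := {a ∈ K : ta ∈ X} has positive Haar measure, then A is an open subgroup of G. -/
/-!
Since `α t = t⁻¹`, the condition `α (t * a) = (t * a)⁻¹` says `t⁻¹ * α a * t = a⁻¹`, so `A` is
the set of elements of the abelian group `K` inverted by the endomorphism `conj t⁻¹ ∘ α`, a
subgroup. It is closed, and by Steinhaus' theorem `A / A ⊆ A` is a neighbourhood of `1`, so `A`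
is open.
-/

open MeasureTheory

def Subgroup.invertedBy {G : Type*} [Group G] (β : G →* G) (K : Subgroup G)
    (hK : ∀ a ∈ K, ∀ b ∈ K, a * b = b * a) : Subgroup G where
  carrier := {a | a ∈ K ∧ β a = a⁻¹}
  one_mem' := ⟨K.one_mem, by simp⟩
  mul_mem' := by
    rintro a b ⟨haK, ha⟩ ⟨hbK, hb⟩
    exact ⟨K.mul_mem haK hbK, by rw [map_mul, ha, hb, ← mul_inv_rev, hK a haK b hbK]⟩
  inv_mem' := by
    rintro a ⟨haK, ha⟩
    exact ⟨K.inv_mem haK, by rw [map_inv, ha]⟩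

theorem map_mul_eq_inv_iff_conj {G : Type*} [Group G] {α : G →* G} {t : G} (ht : α t = t⁻¹)
    (a : G) : α (t * a) = (t * a)⁻¹ ↔ MulAut.conj t⁻¹ (α a) = a⁻¹ := by
  rw [map_mul, ht, mul_inv_rev, eq_mul_inv_iff_mul_eq, MulAut.conj_apply, inv_inv]

theorem Subgroup.isOpen_of_haar_pos {G : Type*} [Group G] [TopologicalSpace G]
    [IsTopologicalGroup G] [LocallyCompactSpace G] [MeasurableSpace G] [BorelSpace G]
    (μ : Measure G) [μ.IsHaarMeasure] [μ.InnerRegular] (H : Subgroup G)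
    (hH : MeasurableSet (H : Set G)) (hpos : 0 < μ H) : IsOpen (H : Set G) := by
  refine H.isOpen_of_mem_nhds <|
    Filter.mem_of_superset (Measure.div_mem_nhds_one_of_haar_pos μ _ hH hpos) ?_
  rintro _ ⟨a, ha, b, hb, rfl⟩
  exact H.div_mem ha hb

theorem stmt_18_general {G : Type*} [Group G] [TopologicalSpace G] [IsTopologicalGroup G]
    [CompactSpace G] [MeasurableSpace G] [BorelSpace G]
    (μ : Measure G) [μ.IsHaarMeasure]
    (K : Subgroup G) (hKopen : IsOpen (K : Set G))
    (hKab : ∀ a ∈ K, ∀ b ∈ K, a * b = b * a)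
    (α : G ≃* G) (hX : IsClosed {x : G | α x = x⁻¹})
    (t : G) (ht : α t = t⁻¹)
    (hpos : 0 < μ {a : G | a ∈ K ∧ α (t * a) = (t * a)⁻¹}) :
    ∃ H : Subgroup G, (H : Set G) = {a : G | a ∈ K ∧ α (t * a) = (t * a)⁻¹} ∧
      IsOpen (H : Set G) := by
  set H := Subgroup.invertedBy ((MulAut.conj t⁻¹).toMonoidHom.comp α) K hKab
  have hH : (H : Set G) = {a | a ∈ K ∧ α (t * a) = (t * a)⁻¹} := by
    ext a
    exact and_congr_right fun _ => (map_mul_eq_inv_iff_conj (α := α) ht a).symm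
  have hclosed : IsClosed (H : Set G) :=
    hH ▸ (K.isClosed_of_isOpen hKopen).inter (hX.preimage (continuous_const_mul t))
  exact ⟨H, hH, H.isOpen_of_haar_pos μ hclosed.measurableSet (hH ▸ hpos)⟩

theorem stmt_18 {G : Type*} [Group G] [TopologicalSpace G] [IsTopologicalGroup G]
    [CompactSpace G] [T2Space G] [MeasurableSpace G] [BorelSpace G]
    (μ : Measure G) [μ.IsHaarMeasure] [IsProbabilityMeasure μ]
    (K : Subgroup G) (hKopen : IsOpen (K : Set G))
    (hKab : ∀ a ∈ K, ∀ b ∈ K, a * b = b * a)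
    (α : G ≃* G) (hX : IsClosed {x : G | α x = x⁻¹})
    (t : G) (ht : α t = t⁻¹)
    (hpos : 0 < μ {a : G | a ∈ K ∧ α (t * a) = (t * a)⁻¹}) :
    ∃ H : Subgroup G, (H : Set G) = {a : G | a ∈ K ∧ α (t * a) = (t * a)⁻¹} ∧
      IsOpen (H : Set G) :=
  stmt_18_general μ K hKopen hKab α hX t ht hpos
end
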